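/- arXiv:1303.1214 — 2 statements merged into one kernel-verified Lean document; each statement's English description precedes it below -/
import Mathlib

section
/- Let p(x) = (1/√(2πΣ)) exp(−(x−μ)²/(2Σ)) be a Gaussian density on ℝ with mean μ and variance Σ > 0, and let h(x) = γx with γ ∈ ℝ, σ_W > 0. Then the constant function K(x) = γΣ/σ_W² satisfies the Euler–Lagrange boundary value problem −d/dx( (1/p(x)) · d/dx( p(x) K(x) ) ) = h'(x)/σ_W² for all x ∈ ℝ. -/
open Real

/-!
For a constant gain `K ≡ c` the flux is `(1 / p) (p K)' = c (log p)'`, and the logarithmic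
derivative of the Gaussian is the affine function `(μ - x) / Σ`. Differentiating once more gives
`-c / Σ`, which is `-h' / σ_W²` precisely for `c = γ Σ / σ_W²`.
-/

lemma one_div_mul_deriv_mul_const {𝕜 𝕜' : Type*} [NontriviallyNormedField 𝕜]
    [NontriviallyNormedField 𝕜'] [NormedAlgebra 𝕜 𝕜'] (p : 𝕜 → 𝕜') (c : 𝕜') (x : 𝕜) :
    1 / p x * deriv (fun z => p z * c) x = c * logDeriv p x := by
  rw [deriv_mul_const_field, logDeriv_apply]
  ring

lemma Real.logDeriv_exp_comp {f : ℝ → ℝ} {x : ℝ} (hf : DifferentiableAt ℝ f x) :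
    logDeriv (fun y => exp (f y)) x = deriv f x := by
  rw [logDeriv_apply, _root_.deriv_exp hf, mul_div_cancel_left₀ _ (exp_ne_zero _)]

lemma logDeriv_gaussian (μ Sig : ℝ) {C : ℝ} (hC : C ≠ 0) (x : ℝ) :
    logDeriv (fun y => C * exp (-(y - μ) ^ 2 / (2 * Sig))) x = (μ - x) / Sig := by
  rw [logDeriv_const_mul x C hC, Real.logDeriv_exp_comp (by fun_prop)]
  have hquad : HasDerivAt (fun y => -(y - μ) ^ 2 / (2 * Sig)) (-(2 * (x - μ)) / (2 * Sig)) x := by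
    simpa using (((hasDerivAt_id x).sub_const μ).pow 2).neg.div_const (2 * Sig)
  rw [hquad.deriv]
  ring

theorem gaussian_gain_solves_ELBVP_general
    (μ Sig γ σW : ℝ) (hSig : Sig > 0)
    (p : ℝ → ℝ) (hp : ∀ x, p x = (1 / Real.sqrt (2 * π * Sig)) * Real.exp (-(x - μ)^2 / (2 * Sig)))
    (h : ℝ → ℝ) (hh : ∀ x, h x = γ * x)
    (K : ℝ → ℝ) (hK : ∀ x, K x = γ * Sig / σW^2) :
    ∀ x : ℝ,
      -deriv (fun y => (1 / p y) * deriv (fun z => p z * K z) y) x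
        = deriv h x / σW^2 := by
  intro x
  have hlog : ∀ y, logDeriv p y = (μ - y) / Sig := by
    rw [funext hp]
    exact logDeriv_gaussian μ Sig (by positivity)
  have hflux : (fun y => 1 / p y * deriv (fun z => p z * K z) y)
      = fun y => γ * Sig / σW ^ 2 * ((μ - y) / Sig) := by
    funext y
    simp only [hK, one_div_mul_deriv_mul_const, hlog]
  rw [hflux, funext hh]
  simp only [deriv_const_mul_field', deriv_div_const, deriv_const_sub_id', deriv_const_mul_id']
  field_simp

theorem gaussian_gain_solves_ELBVP
    (μ Sig γ σW : ℝ) (hSig : Sig > 0) (hσ : σW > 0)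
    (p : ℝ → ℝ) (hp : ∀ x, p x = (1 / Real.sqrt (2 * π * Sig)) * Real.exp (-(x - μ)^2 / (2 * Sig)))
    (h : ℝ → ℝ) (hh : ∀ x, h x = γ * x)
    (K : ℝ → ℝ) (hK : ∀ x, K x = γ * Sig / σW^2) :
    ∀ x : ℝ,
      -deriv (fun y => (1 / p y) * deriv (fun z => p z * K z) y) x
        = deriv h x / σW^2 :=
  gaussian_gain_solves_ELBVP_general μ Sig γ σW hSig p hp h hh K hK
end

section
/- Let p be a smooth strictly positive density on ℝ, h ∈ C¹, ĥ = ∫ h p, σ_W > 0, and suppose K satisfies −(Kp)' = (h − ĥ)p/σ_W². For constants β₁,…,β_M ∈ ℝ, define u(x) = −∑_{m=1}^M β_m [ (β_m/2) h(x) + (1 − β_m/2) ĥ ] K(x) + (σ_W²/2) ∑_{m=1}^M β_m² K(x) K'(x). Then (σ_W²/2) ∑_{m=1}^M β_m² (p K²)''(x) − (u p)'(x) = −(1/σ_W²) (h(x) − ĥ) p(x) ∑_{m=1}^M β_m ĥ for all x. -/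
open MeasureTheory Finset

theorem pda_fpf_key_identity_ns2
    (p h K : ℝ → ℝ) (σW hhat : ℝ) (hσ : σW > 0)
    (hp_smooth : ContDiff ℝ (⊤ : ℕ∞) p) (hp_pos : ∀ x, p x > 0)
    (hh : ContDiff ℝ 1 h) (hK : ContDiff ℝ 2 K)
    (hhat_def : hhat = ∫ x, h x * p x)
    (hfirst : ∀ x, -deriv (fun y => K y * p y) x = (h x - hhat) * p x / σW^2)
    (M : ℕ) (β : Fin M → ℝ)
    (u : ℝ → ℝ)
    (hu : ∀ x, u x = -(∑ m, β m * ((β m / 2) * h x + (1 - β m / 2) * hhat) * K x)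
        + (σW^2 / 2) * (∑ m, (β m)^2) * K x * deriv K x) :
    ∀ x,
      (σW^2 / 2) * (∑ m, (β m)^2) * deriv (deriv (fun y => p y * (K y)^2)) x
        - deriv (fun y => u y * p y) x
        = -(1 / σW^2) * (h x - hhat) * p x * ((∑ m, β m) * hhat) := by
  intro x
  have hs : σW ^ 2 ≠ 0 := pow_ne_zero _ hσ.ne'
  -- differentiability facts
  have hpd : Differentiable ℝ p := hp_smooth.differentiable (by simp)
  have hp'd : Differentiable ℝ (deriv p) := by
    have h2 : ContDiff ℝ (1 + 1) p := hp_smooth.of_le (WithTop.coe_le_coe.mpr le_top)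
    exact (contDiff_succ_iff_deriv.mp h2).2.2.differentiable one_ne_zero
  have hKd : Differentiable ℝ K := hK.differentiable two_ne_zero
  have hK'd : Differentiable ℝ (deriv K) := by
    have h2 : ContDiff ℝ (1 + 1) K := by rw [one_add_one_eq_two]; exact hK
    exact (contDiff_succ_iff_deriv.mp h2).2.2.differentiable one_ne_zero
  have hhd : Differentiable ℝ h := hh.differentiable one_ne_zero
  set S : ℝ := ∑ m, (β m)^2 with hS
  set B : ℝ := ∑ m, β m with hB
  -- first derivative of K*p as a function
  have E4 : deriv (fun y => K y * p y) = fun y => deriv K y * p y + K y * deriv p y :=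
    funext fun y => ((hKd y).hasDerivAt.mul (hpd y).hasDerivAt).deriv
  -- R1 : pointwise relation from hfirst
  have hR1 : σW ^ 2 * (deriv K x * p x + K x * deriv p x) = -((h x - hhat) * p x) := by
    have h0 := hfirst x
    rw [E4] at h0
    field_simp at h0 ⊢
    linarith
  -- R2 : differentiate hfirst
  have E3 : (fun y => deriv K y * p y + K y * deriv p y)
      = fun y => -((h y - hhat) * p y / σW ^ 2) := by
    funext y
    have h0 := hfirst y
    rw [E4] at h0
    linarith
  have Hl : HasDerivAt (fun y => deriv K y * p y + K y * deriv p y)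
      ((deriv (deriv K) x * p x + deriv K x * deriv p x)
        + (deriv K x * deriv p x + K x * deriv (deriv p) x)) x :=
    (((hK'd x).hasDerivAt.mul (hpd x).hasDerivAt).add
      ((hKd x).hasDerivAt.mul (hp'd x).hasDerivAt))
  have Hr : HasDerivAt (fun y => -((h y - hhat) * p y / σW ^ 2))
      (-((deriv h x * p x + (h x - hhat) * deriv p x) / σW ^ 2)) x := by
    have : HasDerivAt (fun y => (h y - hhat) * p y)
        (deriv h x * p x + (h x - hhat) * deriv p x) x :=
      ((hhd x).hasDerivAt.sub_const hhat).mul (hpd x).hasDerivAt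
    exact (this.div_const (σW ^ 2)).neg
  have hR2 : (deriv (deriv K) x * p x + deriv K x * deriv p x)
        + (deriv K x * deriv p x + K x * deriv (deriv p) x)
      = -((deriv h x * p x + (h x - hhat) * deriv p x) / σW ^ 2) := by
    have := E3 ▸ Hl
    exact this.unique Hr
  have hR2' : σW ^ 2 * ((deriv (deriv K) x * p x + deriv K x * deriv p x)
        + (deriv K x * deriv p x + K x * deriv (deriv p) x))
      = -((deriv h x * p x + (h x - hhat) * deriv p x)) := by
    rw [hR2]; field_simp
  -- second derivative of p*K^2
  have E0 : (fun y => p y * (K y)^2) = fun y => p y * (K y * K y) :=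
    funext fun y => by ring
  have E1 : deriv (fun y => p y * (K y * K y))
      = fun y => deriv p y * (K y * K y) + p y * (deriv K y * K y + K y * deriv K y) :=
    funext fun y =>
      ((hpd y).hasDerivAt.mul ((hKd y).hasDerivAt.mul (hKd y).hasDerivAt)).deriv
  have H2 : HasDerivAt
      (fun y => deriv p y * (K y * K y) + p y * (deriv K y * K y + K y * deriv K y))
      ((deriv (deriv p) x * (K x * K x)
          + deriv p x * (deriv K x * K x + K x * deriv K x))
        + (deriv p x * (deriv K x * K x + K x * deriv K x)
          + p x * ((deriv (deriv K) x * K x + deriv K x * deriv K x)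
              + (deriv K x * deriv K x + K x * deriv (deriv K) x)))) x :=
    (((hp'd x).hasDerivAt.mul ((hKd x).hasDerivAt.mul (hKd x).hasDerivAt)).add
      ((hpd x).hasDerivAt.mul
        (((hK'd x).hasDerivAt.mul (hKd x).hasDerivAt).add
          ((hKd x).hasDerivAt.mul (hK'd x).hasDerivAt))))
  have hPK2 : deriv (deriv (fun y => p y * (K y)^2)) x
      = (deriv (deriv p) x * (K x * K x)
          + deriv p x * (deriv K x * K x + K x * deriv K x))
        + (deriv p x * (deriv K x * K x + K x * deriv K x)
          + p x * ((deriv (deriv K) x * K x + deriv K x * deriv K x)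
              + (deriv K x * deriv K x + K x * deriv (deriv K) x))) := by
    rw [E0, E1]; exact H2.deriv
  -- rewrite u*p in closed form
  have hsum : ∀ y, (∑ m, β m * ((β m / 2) * h y + (1 - β m / 2) * hhat) * K y)
      = (S / 2 * h y + (B - S / 2) * hhat) * K y := by
    intro y
    rw [hS, hB]
    rw [show (∑ m, β m * ((β m / 2) * h y + (1 - β m / 2) * hhat) * K y)
        = ∑ m, ((β m)^2 * ((h y / 2 - hhat / 2) * K y) + β m * (hhat * K y)) from
      Finset.sum_congr rfl fun m _ => by ring]
    rw [Finset.sum_add_distrib, ← Finset.sum_mul, ← Finset.sum_mul]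
    ring
  have E2 : (fun y => u y * p y)
      = fun y => (-(S / 2 * h y + (B - S / 2) * hhat) * K y
          + (σW ^ 2 / 2) * S * (K y * deriv K y)) * p y := by
    funext y
    rw [hu y, hsum y]
    ring
  have Hup : HasDerivAt
      (fun y => (-(S / 2 * h y + (B - S / 2) * hhat) * K y
          + (σW ^ 2 / 2) * S * (K y * deriv K y)) * p y)
      (((-(S / 2 * deriv h x) * K x + -(S / 2 * h x + (B - S / 2) * hhat) * deriv K x)
          + (σW ^ 2 / 2) * S * (deriv K x * deriv K x + K x * deriv (deriv K) x)) * p x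
        + (-(S / 2 * h x + (B - S / 2) * hhat) * K x
          + (σW ^ 2 / 2) * S * (K x * deriv K x)) * deriv p x) x := by
    refine HasDerivAt.mul ?_ (hpd x).hasDerivAt
    exact (((((hhd x).hasDerivAt.const_mul (S / 2)).add_const
        ((B - S / 2) * hhat)).neg).mul (hKd x).hasDerivAt).add
      (((hKd x).hasDerivAt.mul (hK'd x).hasDerivAt).const_mul ((σW ^ 2 / 2) * S))
  have hUP : deriv (fun y => u y * p y) x
      = ((-(S / 2 * deriv h x) * K x + -(S / 2 * h x + (B - S / 2) * hhat) * deriv K x)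
          + (σW ^ 2 / 2) * S * (deriv K x * deriv K x + K x * deriv (deriv K) x)) * p x
        + (-(S / 2 * h x + (B - S / 2) * hhat) * K x
          + (σW ^ 2 / 2) * S * (K x * deriv K x)) * deriv p x := by
    rw [E2]; exact Hup.deriv
  rw [hPK2, hUP]
  field_simp
  linear_combination (2 * (σW ^ 2 * S / 2 * K x)) * hR2'
    + (2 * (σW ^ 2 * S / 2 * deriv K x + B * hhat)) * hR1
end
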